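/- Let w be a Kreweras word of length 3n and let 1 ≤ i ≤ 3n with w_i = A. Then w_{σ_w(i)} ∈ {B, C}, i.e., the letter of w in position σ_w(i) is not A. -/

import Mathlib

/-- The three letters of a Kreweras word. -/
inductive KLetter : Type
  | A | B | C
deriving DecidableEq, Repr

open KLetter

/-- `w` is a Kreweras word of length `3 * n`: it has `n` `A`'s, `n` `B`'s, `n` `C`'s,
and every prefix has at least as many `A`'s as `B`'s and at least as many `A`'s as `C`'s. -/
def IsKrewerasWord (n : ℕ) (w : List KLetter) : Prop :=
  w.length = 3 * n ∧ w.count A = n ∧ w.count B = n ∧ w.count C = n ∧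
  ∀ k : ℕ, (w.take k).count B ≤ (w.take k).count A ∧
           (w.take k).count C ≤ (w.take k).count A

/-- `kiota w` is the smallest index `ι ≥ 1` (1-indexed) such that the prefix of
length `ι` of `w` has equally many `A`'s as `B`'s, or equally many `A`'s as `C`'s
(and `0` if no such index exists). -/
def kiota (w : List KLetter) : ℕ :=
  (((List.range (w.length + 1)).filter fun k =>
      decide (1 ≤ k) &&
      (((w.take k).count A == (w.take k).count B) ||
       ((w.take k).count A == (w.take k).count C))).headD 0)

/-- Promotion of a Kreweras word:
`pro w = (w₂, …, w_{ι-1}, A, w_{ι+1}, …, w_{3n}, w_ι)` where `ι = kiota w`. -/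
def pro (w : List KLetter) : List KLetter :=
  ((w.drop 1).set (kiota w - 2) A) ++ [w.getD (kiota w - 1) A]

/-- The trip permutation `σ_w` of a Kreweras word of length `3 * n`, as a function on
1-indexed positions: `σ_w i` is the unique element of `{1, …, 3n}` congruent to
`kiota (pro^[i-1] w) + i - 1` modulo `3 * n`. -/
def ksigma (n : ℕ) (w : List KLetter) (i : ℕ) : ℕ :=
  (kiota (pro^[i - 1] w) + i - 2) % (3 * n) + 1

/-- `keps w i` is the letter of `pro^[i-1] w` in (1-indexed) position `kiota (pro^[i-1] w)`. -/
def keps (w : List KLetter) (i : ℕ) : KLetter :=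
  (pro^[i - 1] w).getD (kiota (pro^[i - 1] w) - 1) A

/-- The negation swapping `B` and `C` (and fixing `A`). -/
def negL : KLetter → KLetter
  | A => A
  | B => C
  | C => B

open Classical in
/-- The involution `τ_i` on Kreweras words of length `3 * n`: swap the letters in
(1-indexed) positions `i` and `i + 1` if the result is again a Kreweras word,
and otherwise do nothing. -/
noncomputable def tau (n i : ℕ) (w : List KLetter) : List KLetter :=
  let w' := (w.set (i - 1) (w.getD i A)).set i (w.getD (i - 1) A)
  if IsKrewerasWord n w' then w' else w

/-- `tauDown n j = τ_j ∘ τ_{j-1} ∘ ⋯ ∘ τ_1`. -/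
noncomputable def tauDown (n : ℕ) : ℕ → List KLetter → List KLetter
  | 0, w => w
  | j + 1, w => tau n (j + 1) (tauDown n j w)

/-- `evacAux n j = (tauDown n 1) ∘ (tauDown n 2) ∘ ⋯ ∘ (tauDown n j)`. -/
noncomputable def evacAux (n : ℕ) : ℕ → List KLetter → List KLetter
  | 0, w => w
  | j + 1, w => evacAux n j (tauDown n (j + 1) w)

/-- Evacuation on Kreweras words of length `3 * n`:
`evac = (τ_1) ∘ (τ_2 ∘ τ_1) ∘ ⋯ ∘ (τ_{3n-1} ∘ ⋯ ∘ τ_2 ∘ τ_1)`. -/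
noncomputable def evac (n : ℕ) (w : List KLetter) : List KLetter :=
  evacAux n (3 * n - 1) w

/-- `tauAsc n k c = τ_{k+c-1} ∘ ⋯ ∘ τ_{k+1} ∘ τ_k`. -/
noncomputable def tauAsc (n k : ℕ) : ℕ → List KLetter → List KLetter
  | 0, w => w
  | j + 1, w => tau n (k + j) (tauAsc n k j w)

/-- `evacStarAux n j = (tauAsc n 1 (3n-1)) ∘ (tauAsc n 2 (3n-2)) ∘ ⋯ ∘ (tauAsc n j (3n-j))`. -/
noncomputable def evacStarAux (n : ℕ) : ℕ → List KLetter → List KLetter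
  | 0, w => w
  | j + 1, w => evacStarAux n j (tauAsc n (j + 1) (3 * n - (j + 1)) w)

/-- Dual evacuation on Kreweras words of length `3 * n`:
`evac* = (τ_{3n-1} ∘ ⋯ ∘ τ_1) ∘ (τ_{3n-1} ∘ ⋯ ∘ τ_2) ∘ ⋯ ∘ (τ_{3n-1})`. -/
noncomputable def evacStar (n : ℕ) (w : List KLetter) : List KLetter :=
  evacStarAux n (3 * n - 1) w

/-- The three-element "V"-shaped poset: `a < b`, `a < c`, with `b`, `c` incomparable. -/
inductive VP : Type
  | a | b | c
deriving DecidableEq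

instance : PartialOrder VP where
  le x y := x = y ∨ x = VP.a
  le_refl x := Or.inl rfl
  le_trans x y z hxy hyz := by
    rcases hxy with rfl | rfl
    · exact hyz
    · exact Or.inr rfl
  le_antisymm x y hxy hyx := by
    rcases hxy with rfl | rfl
    · rfl
    · rcases hyx with rfl | rfl <;> rfl

/-- The labeling of elements of `V(n) = VP × Fin n` by letters. -/
def vlabel {n : ℕ} (p : VP × Fin n) : KLetter :=
  match p.1 with
  | VP.a => A
  | VP.b => B
  | VP.c => C

/-- `L` is a linear extension of `V(n) = VP × Fin n` (with the product order):
a list of all elements of `V(n)`, each appearing once, such that `L_i ≤ L_j`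
implies `i ≤ j`. -/
def IsLinearExtension (n : ℕ) (L : List (VP × Fin n)) : Prop :=
  L.Nodup ∧ (∀ p : VP × Fin n, p ∈ L) ∧
  ∀ i j : Fin L.length, L.get i ≤ L.get j → (i : ℕ) ≤ (j : ℕ)

/-- A connected Kreweras word: a Kreweras word of length `3 * n` having no proper
nonempty consecutive substring which is itself a Kreweras word. -/
def ConnectedKrewerasWord (n : ℕ) (w : List KLetter) : Prop :=
  IsKrewerasWord n w ∧
  ∀ (u : List KLetter) (m : ℕ), u <:+: w → u ≠ [] → u ≠ w → ¬ IsKrewerasWord m u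

/-!
For a letter `x`, let `h_x(t) = #A − #x` in the prefix of length `t`; a Kreweras word is a pair
of lattice paths `h_B, h_C ≥ 0` returning to `0`. For `w_i = A`, let `t` be the first position
after `i` at which `h_B` or `h_C` falls below its value at `i`. The step into `t` is a down-step,
so `w_t ∈ {B, C}`; it remains to see that `σ_w(i) = t`.

Promotion deletes the first letter and moves the letter at `ι` to the end, so on the heights it
acts as a shift by one position plus a correction that is constant before `ι` and constant from
`ι` on. A trip from an `A` never straddles `ι`, so promotion moves both its ends one step to the
left. After `i − 1` promotions the trip starts at position `1`, where by definition it ends at `ι`.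
-/

theorem List.set_append_getElem_perm {α : Type*} {l : List α} {k : ℕ} (hk : k < l.length)
    (a : α) : (l.set k a ++ [l[k]]).Perm (a :: l) :=
  List.perm_append_singleton _ _ |>.trans <|
    ((List.set_perm_cons_eraseIdx hk a).cons _).trans <|
      (List.Perm.swap _ _ _).trans ((List.getElem_cons_eraseIdx_perm hk).cons _)

namespace Kreweras

def weight (x : KLetter) (l : List KLetter) : ℤ := l.count A - l.count x

def height (x : KLetter) (w : List KLetter) (t : ℕ) : ℤ := weight x (w.take t)

section Weight

variable (x : KLetter)

@[simp] theorem weight_A (l : List KLetter) : weight A l = 0 := sub_self _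

@[simp] theorem height_A (w : List KLetter) (t : ℕ) : height A w t = 0 := weight_A _

theorem weight_append (l₁ l₂ : List KLetter) :
    weight x (l₁ ++ l₂) = weight x l₁ + weight x l₂ := by
  simp only [weight, List.count_append]; push_cast; ring

theorem weight_cons (y : KLetter) (l : List KLetter) :
    weight x (y :: l) = weight x [y] + weight x l :=
  weight_append x [y] l

theorem _root_.List.Perm.weight_eq {l l' : List KLetter} (h : l.Perm l') :
    weight x l = weight x l' := by
  simp only [weight, h.count_eq]

theorem weight_set {l : List KLetter} {k : ℕ} (hk : k < l.length) (a : KLetter) :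
    weight x (l.set k a) = weight x l - weight x [l[k]] + weight x [a] := by
  rw [(List.set_perm_cons_eraseIdx hk a).weight_eq,
    ← (List.getElem_cons_eraseIdx_perm hk).weight_eq, weight_cons x a, weight_cons x l[k]]
  ring

theorem neg_one_le_weight_singleton (y : KLetter) : -1 ≤ weight x [y] := by
  cases x <;> cases y <;> decide

theorem weight_singleton_nonpos {y : KLetter} (hy : y ≠ A) : weight x [y] ≤ 0 := by
  cases x <;> cases y <;> first | decide | exact absurd rfl hy

theorem weight_singleton_A (hx : x ≠ A) : weight x [A] = 1 := by
  cases x <;> first | decide | exact absurd rfl hx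

theorem eq_of_weight_singleton_neg {y : KLetter} (h : weight x [y] < 0) : y = x := by
  cases x <;> cases y <;> first | rfl | exact absurd h (by decide)

end Weight

section Height

variable {x : KLetter} {w : List KLetter} {t : ℕ}

@[simp] theorem height_zero : height x w 0 = 0 := by simp [height, weight]

theorem height_of_length_le (h : w.length ≤ t) : height x w t = weight x w := by
  rw [height, List.take_of_length_le h]

theorem height_succ (h : t < w.length) :
    height x w (t + 1) = height x w t + weight x [w.getD t A] := by
  rw [height, height, List.take_add_one, List.getElem?_eq_getElem h, List.getD_eq_getElem _ _ h]
  exact weight_append x _ _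

theorem height_sub_one_le_height_succ : height x w t - 1 ≤ height x w (t + 1) := by
  rcases lt_or_ge t w.length with h | h
  · linarith [height_succ (x := x) h, neg_one_le_weight_singleton x (w.getD t A)]
  · rw [height_of_length_le h, height_of_length_le (by omega)]; linarith

theorem lt_length_of_height_succ_lt (h : height x w (t + 1) < height x w t) : t < w.length := by
  by_contra! hle
  rw [height_of_length_le hle, height_of_length_le (by omega)] at h
  exact lt_irrefl _ h

theorem getD_eq_of_height_succ_lt (h : height x w (t + 1) < height x w t) : w.getD t A = x := by
  have := height_succ (x := x) (lt_length_of_height_succ_lt h)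
  exact eq_of_weight_singleton_neg x (by linarith)

end Height

section KrewerasWord

variable {n : ℕ} {w : List KLetter}

theorem _root_.IsKrewerasWord.height_nonneg (hw : IsKrewerasWord n w) (x : KLetter) (t : ℕ) :
    0 ≤ height x w t := by
  obtain ⟨-, -, -, -, h⟩ := hw
  have := h t
  cases x <;> simp only [height, weight, sub_nonneg, Nat.cast_le] <;> omega

theorem _root_.IsKrewerasWord.weight_eq_zero (hw : IsKrewerasWord n w) (x : KLetter) :
    weight x w = 0 := by
  obtain ⟨-, hA, hB, hC, -⟩ := hw
  cases x <;> simp [weight, hA, hB, hC]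

theorem _root_.IsKrewerasWord.getD_zero (hw : IsKrewerasWord n w) : w.getD 0 A = A := by
  cases w with
  | nil => rfl
  | cons y u =>
    have h := hw.height_nonneg y 1
    cases y <;> simp_all [height, weight]

theorem _root_.IsKrewerasWord.cons_drop_one (hw : IsKrewerasWord n w) (hn : 0 < n) :
    A :: w.drop 1 = w := by
  obtain ⟨y, u, rfl⟩ := List.exists_cons_of_length_pos (by rw [hw.1]; omega)
  simpa using hw.getD_zero.symm

theorem _root_.IsKrewerasWord.height_one (hw : IsKrewerasWord n w) (hn : 0 < n) (x : KLetter) :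
    height x w 1 = weight x [A] := by
  rw [height_succ (by rw [hw.1]; omega), hw.getD_zero, height_zero, zero_add]

theorem _root_.IsKrewerasWord.of_perm {w' : List KLetter} (hw : IsKrewerasWord n w)
    (hp : w'.Perm w) (h : ∀ x t, 0 ≤ height x w' t) : IsKrewerasWord n w' := by
  refine ⟨hp.length_eq.trans hw.1, (hp.count_eq A).trans hw.2.1, (hp.count_eq B).trans hw.2.2.1,
    (hp.count_eq C).trans hw.2.2.2.1, fun t => ⟨?_, ?_⟩⟩ <;>
    simpa only [height, weight, sub_nonneg, Nat.cast_le] using h _ t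

end KrewerasWord

/-- The trip of the paper starting at position `i` ends at position `t`. Positions are prefix
lengths, so the letter at position `t` is `w.getD (t - 1) A`; letting `x` range over all letters
is harmless since `height A` vanishes. -/
def IsTripEnd (w : List KLetter) (i t : ℕ) : Prop :=
  i < t ∧ (∃ x, height x w t < height x w i) ∧
    ∀ s, i ≤ s → s < t → ∀ x, height x w i ≤ height x w s

namespace IsTripEnd

variable {w : List KLetter} {i t : ℕ}

theorem lt_of_forall_le (h : IsTripEnd w i t) {u : ℕ}
    (hu : ∀ s, i ≤ s → s ≤ u → ∀ x, height x w i ≤ height x w s) : u < t := by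
  by_contra! htu
  obtain ⟨x, hx⟩ := h.2.1
  exact (hu t h.1.le htu x).not_gt hx

theorem unique {t' : ℕ} (h : IsTripEnd w i t) (h' : IsTripEnd w i t') : t = t' := by
  by_contra hne
  rcases Nat.lt_or_gt_of_ne hne with hlt | hlt
  · exact lt_irrefl t (h.lt_of_forall_le fun s hs hst => h'.2.2 s hs (by omega))
  · exact lt_irrefl t' (h'.lt_of_forall_le fun s hs hst => h.2.2 s hs (by omega))

theorem exists_height_lt_height_sub_one (h : IsTripEnd w i t) :
    ∃ x, height x w t < height x w (t - 1) := by
  obtain ⟨x, hx⟩ := h.2.1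
  exact ⟨x, hx.trans_le (h.2.2 (t - 1) (by have := h.1; omega) (by have := h.1; omega) x)⟩

theorem le_length (h : IsTripEnd w i t) : t ≤ w.length := by
  obtain ⟨x, hx⟩ := h.exists_height_lt_height_sub_one
  have h1 := h.1
  rw [show t = t - 1 + 1 by omega] at hx
  have := lt_length_of_height_succ_lt hx
  omega

theorem getD_ne_A (h : IsTripEnd w i t) : w.getD (t - 1) A ≠ A := by
  obtain ⟨x, hx⟩ := h.exists_height_lt_height_sub_one
  have h1 := h.1
  rw [show t = t - 1 + 1 by omega] at hx
  rw [getD_eq_of_height_succ_lt hx]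
  rintro rfl
  simp at hx

theorem of_height_shift {w' : List KLetter} (a : ℕ)
    (hc : ∀ x, ∃ c, ∀ s, i ≤ s → s ≤ t → height x w' s = height x w (s + a) + c)
    (h : IsTripEnd w (i + a) (t + a)) : IsTripEnd w' i t := by
  choose c hc using hc
  obtain ⟨hit, ⟨x, hx⟩, hmin⟩ := h
  refine ⟨by omega, ⟨x, ?_⟩, fun s hs hst y => ?_⟩
  · rw [hc x t (by omega) le_rfl, hc x i le_rfl (by omega)]
    linarith
  · rw [hc y s hs hst.le, hc y i le_rfl (by omega)]
    linarith [hmin (s + a) (by omega) (by omega) y]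

theorem nested {j u : ℕ} (hu : IsTripEnd w j u) (hji : j ≤ i) (hiu : i < u)
    (hA : w.getD i A = A) (ht : IsTripEnd w (i + 1) t) : t < u := by
  have hit := ht.1
  have hil : i < w.length := by have := ht.le_length; omega
  refine hu.lt_of_forall_le fun s hjs hst x => ?_
  rcases eq_or_ne x A with rfl | hx
  · simp
  rcases le_or_gt s i with hsi | hsi
  · exact hu.2.2 s hjs (by omega) x
  have hi := hu.2.2 i hji hiu x
  -- the up-step at `i + 1` pays for the single down-step into `t`
  have hup : height x w (i + 1) = height x w i + 1 := by
    rw [height_succ hil, hA, weight_singleton_A x hx]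
  rcases lt_or_eq_of_le (show s ≤ t by omega) with hs | rfl
  · linarith [ht.2.2 s hsi hs x]
  · obtain ⟨s', rfl⟩ : ∃ s', s = s' + 1 := ⟨s - 1, by omega⟩
    linarith [ht.2.2 s' (by omega) (by omega) x,
      height_sub_one_le_height_succ (x := x) (w := w) (t := s')]

end IsTripEnd

theorem exists_isTripEnd_of_height_lt {w : List KLetter} {i t : ℕ} {x : KLetter} (hit : i < t)
    (h : height x w t < height x w i) : ∃ t', IsTripEnd w i t' := by
  classical
  have hex : ∃ s, i < s ∧ ∃ y, height y w s < height y w i := ⟨t, hit, x, h⟩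
  refine ⟨Nat.find hex, (Nat.find_spec hex).1, (Nat.find_spec hex).2, fun s his hs y => ?_⟩
  rcases eq_or_lt_of_le his with rfl | his
  · exact le_rfl
  · by_contra! hlt
    exact Nat.find_min hex hs ⟨his, y, hlt⟩

theorem _root_.IsKrewerasWord.exists_isTripEnd {n : ℕ} {w : List KLetter}
    (hw : IsKrewerasWord n w) {j : ℕ} (hj : j < w.length) (hA : w.getD j A = A) :
    ∃ t, IsTripEnd w (j + 1) t := by
  have hup : height B w (j + 1) = height B w j + 1 := by
    rw [height_succ hj, hA]; rfl
  have hpos : 0 < height B w (j + 1) := by linarith [hw.height_nonneg B j]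
  have hend : height B w w.length = 0 := by
    rw [height_of_length_le le_rfl, hw.weight_eq_zero]
  refine exists_isTripEnd_of_height_lt (t := w.length) (x := B) ?_ (by linarith)
  by_contra! hle
  rw [height_of_length_le hle, hw.weight_eq_zero] at hpos
  exact lt_irrefl _ hpos

theorem kiota_eq {w : List KLetter} {k : ℕ} (hk : 1 ≤ k) (hkw : k ≤ w.length)
    (hbal : height B w k = 0 ∨ height C w k = 0)
    (hmin : ∀ j, 1 ≤ j → j < k → height B w j ≠ 0 ∧ height C w j ≠ 0) :
    kiota w = k := by
  have key : ∀ j, ((w.take j).count A == (w.take j).count B ||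
      (w.take j).count A == (w.take j).count C) =
        decide (height B w j = 0 ∨ height C w j = 0) := by
    intro j
    simp [height, weight, sub_eq_zero, Bool.decide_or, Bool.beq_eq_decide_eq]
  rw [kiota, List.headD_eq_head?_getD, List.head?_filter, List.find?_range_eq_some.2]
  · rfl
  simp only [key, Bool.and_eq_true, decide_eq_true_eq, List.mem_range, Bool.not_eq_true',
    Bool.and_eq_false_iff, decide_eq_false_iff_not]
  refine ⟨⟨hk, hbal⟩, by omega, fun j hj => ?_⟩
  by_cases hj1 : 1 ≤ j
  · exact Or.inr (by have := hmin j hj1 hj; tauto)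
  · exact Or.inl hj1

theorem _root_.IsKrewerasWord.isTripEnd_one_kiota {n : ℕ} {w : List KLetter}
    (hw : IsKrewerasWord n w) (hn : 0 < n) : IsTripEnd w 1 (kiota w) := by
  have hlen : 1 < w.length := by rw [hw.1]; omega
  obtain ⟨t, ht⟩ := hw.exists_isTripEnd (j := 0) (by omega) hw.getD_zero
  have h1 : ∀ x, x ≠ A → height x w 1 = 1 := fun x hx => by
    rw [hw.height_one hn, weight_singleton_A x hx]
  suffices kiota w = t by rwa [this]
  refine kiota_eq ht.1.le ht.le_length ?_ fun j hj hjt => ?_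
  · obtain ⟨x, hx⟩ := ht.2.1
    have := hw.height_nonneg x t
    cases x
    · simp at hx
    · exact Or.inl (by linarith [h1 B (by decide)])
    · exact Or.inr (by linarith [h1 C (by decide)])
  · have hB := ht.2.2 j hj hjt B
    have hC := ht.2.2 j hj hjt C
    rw [h1 B (by decide)] at hB
    rw [h1 C (by decide)] at hC
    constructor <;> intro h <;> linarith

section Promotion

variable {w : List KLetter}

theorem take_pro {s : ℕ} (hs : s < w.length) :
    (pro w).take s = ((w.drop 1).take s).set (kiota w - 2) A := by
  rw [pro, List.take_append_of_le_length (by simp; omega), List.take_set]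

theorem getD_kiota_sub_one (h2 : 2 ≤ kiota w) (hk : kiota w - 2 < (w.drop 1).length) :
    w.getD (kiota w - 1) A = (w.drop 1)[kiota w - 2] := by
  rw [List.getElem_drop, List.getD_eq_getElem _ _ (by simp at hk; omega)]
  congr 1
  omega

theorem height_succ_eq_height_one_add (x : KLetter) (s : ℕ) :
    height x w (s + 1) = height x w 1 + weight x ((w.drop 1).take s) := by
  rw [height, add_comm, List.take_add, weight_append]
  rfl

theorem height_pro_of_lt_kiota (x : KLetter) {s : ℕ} (hs : s + 1 < kiota w)
    (hsl : s < w.length) : height x (pro w) s = height x w (s + 1) - height x w 1 := by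
  rw [height, take_pro hsl, List.set_eq_of_length_le (by simp; omega),
    height_succ_eq_height_one_add]
  ring

theorem height_pro_of_kiota_le (x : KLetter) {s : ℕ} (h2 : 2 ≤ kiota w) (hs : kiota w ≤ s + 1)
    (hsl : s < w.length) :
    height x (pro w) s = height x w (s + 1) - height x w 1 + weight x [A]
      - weight x [w.getD (kiota w - 1) A] := by
  have hk : kiota w - 2 < ((w.drop 1).take s).length := by simp; omega
  rw [height, take_pro hsl, weight_set x hk, height_succ_eq_height_one_add,
    getD_kiota_sub_one h2 (by simp; omega), List.getElem_take]
  ring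

theorem pro_perm (h2 : 2 ≤ kiota w) (hle : kiota w ≤ w.length) :
    (pro w).Perm (A :: w.drop 1) := by
  have hk : kiota w - 2 < (w.drop 1).length := by simp; omega
  rw [pro, getD_kiota_sub_one h2 hk]
  exact List.set_append_getElem_perm hk A

theorem getD_pro {j : ℕ} (h2 : 2 ≤ kiota w) (hj : j + 1 < w.length) (hι : j + 2 ≠ kiota w) :
    (pro w).getD j A = w.getD (j + 1) A := by
  rw [pro, List.getD_append _ _ _ _ (by simp; omega), List.getD_eq_getElem?_getD,
    List.getElem?_set_ne (by omega), List.getElem?_drop, ← List.getD_eq_getElem?_getD]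
  rw [add_comm]

end Promotion

variable {n : ℕ} {w : List KLetter}

theorem isKrewerasWord_pro (hw : IsKrewerasWord n w) (hn : 0 < n) :
    IsKrewerasWord n (pro w) := by
  have hι := hw.isTripEnd_one_kiota hn
  have h2 : 2 ≤ kiota w := hι.1
  have hperm : (pro w).Perm w := by
    simpa only [hw.cons_drop_one hn] using pro_perm h2 hι.le_length
  refine hw.of_perm hperm fun x s => ?_
  rcases lt_or_ge s w.length with hs | hs
  · rcases lt_or_ge (s + 1) (kiota w) with hlow | hhigh
    · rw [height_pro_of_lt_kiota x hlow hs]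
      linarith [hι.2.2 (s + 1) (by omega) hlow x]
    · rw [height_pro_of_kiota_le x h2 hhigh hs, hw.height_one hn]
      linarith [hw.height_nonneg x (s + 1), weight_singleton_nonpos x hι.getD_ne_A]
  · rw [height_of_length_le (by rwa [hperm.length_eq]), hperm.weight_eq, hw.weight_eq_zero]

theorem isKrewerasWord_iterate_pro (hw : IsKrewerasWord n w) (hn : 0 < n) (j : ℕ) :
    IsKrewerasWord n (pro^[j] w) := by
  induction j with
  | zero => exact hw
  | succ j ih => rw [Function.iterate_succ_apply']; exact isKrewerasWord_pro ih hn

theorem isTripEnd_pro (hw : IsKrewerasWord n w) (hn : 0 < n) {i t : ℕ} (hi : 1 ≤ i)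
    (hA : w.getD i A = A) (h : IsTripEnd w (i + 1) (t + 1)) : IsTripEnd (pro w) i t := by
  have hι := hw.isTripEnd_one_kiota hn
  have h2 : 2 ≤ kiota w := hι.1
  have htl := h.le_length
  have hiι : i + 1 ≠ kiota w := fun he => hι.getD_ne_A (by rwa [← he])
  refine h.of_height_shift 1 fun x => ?_
  rcases lt_or_gt_of_ne hiι with hlt | hgt
  · have htι : t + 1 < kiota w := hι.nested hi (by omega) hA h
    exact ⟨-height x w 1, fun s _ hst => by
      rw [height_pro_of_lt_kiota x (by omega) (by omega)]; ring⟩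
  · exact ⟨-height x w 1 + weight x [A] - weight x [w.getD (kiota w - 1) A], fun s hs hst => by
      rw [height_pro_of_kiota_le x h2 (by omega) (by omega)]; ring⟩

theorem isTripEnd_iterate_pro (hw : IsKrewerasWord n w) (hn : 0 < n) {j t : ℕ}
    (hA : w.getD j A = A) (h : IsTripEnd w (j + 1) (t + j)) :
    IsTripEnd (pro^[j] w) 1 t := by
  induction j generalizing w with
  | zero => exact h
  | succ j ih =>
    have hι := hw.isTripEnd_one_kiota hn
    have := h.1
    have := h.le_length
    have hA' : (pro w).getD j A = A := by
      rw [getD_pro hι.1 (by omega) fun he => hι.getD_ne_A (by rwa [← he])]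
      exact hA
    rw [Function.iterate_succ_apply]
    exact ih (isKrewerasWord_pro hw hn) hA' (isTripEnd_pro hw hn (by omega) hA h)

end Kreweras

open Kreweras in
/-- If `w_i = A` then `w_{σ_w(i)} ∈ {B, C}` (letters are 1-indexed). -/
theorem ksigma_of_A (n : ℕ) (w : List KLetter) (hw : IsKrewerasWord n w)
    (i : ℕ) (hi1 : 1 ≤ i) (hi2 : i ≤ 3 * n)
    (hA : w.getD (i - 1) KLetter.A = KLetter.A) :
    w.getD (ksigma n w i - 1) KLetter.A = KLetter.B ∨
      w.getD (ksigma n w i - 1) KLetter.A = KLetter.C := by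
  obtain ⟨j, rfl⟩ : ∃ j, i = j + 1 := ⟨i - 1, by omega⟩
  rw [Nat.add_sub_cancel] at hA
  have hn : 0 < n := by omega
  obtain ⟨t, ht⟩ := hw.exists_isTripEnd (by rw [hw.1]; omega) hA
  obtain ⟨u, rfl⟩ : ∃ u, t = u + j := ⟨t - j, by have := ht.1; omega⟩
  have hu : kiota (pro^[j] w) = u :=
    ((isKrewerasWord_iterate_pro hw hn j).isTripEnd_one_kiota hn).unique
      (isTripEnd_iterate_pro hw hn hA ht)
  have hσ : ksigma n w (j + 1) = u + j := by
    have := ht.1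
    have := ht.le_length
    rw [ksigma, Nat.add_sub_cancel, hu, Nat.mod_eq_of_lt (by rw [hw.1] at this; omega)]
    omega
  have hne := ht.getD_ne_A
  rw [hσ]
  revert hne
  cases w.getD (u + j - 1) A <;> simp
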